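/- arXiv:2306.17704 — 7 statements merged into one kernel-verified Lean document; each statement's English description precedes it below -/
import Mathlib

section
/- (Proposition 3, sufficiency of the balance condition) If there exists a real number z > 0 such that α(c)·G_{c,d}(γ(c), β(c, d)) = z for every c ∈ C and every d ∈ U_c, then (α, β) is optimal, i.e. V(α, β) ≥ V(α', β') for every feasible solution (α', β'). -/
/-!
The balanced solution has value exactly `z`. For any other feasible `(α', β')`, both weight vectors
sum to the same total, so some context `c` has `α' c ≤ α c`, and within it some `d` has
`β' c d ≤ β c d`. Monotonicity of `G` then bounds the value of `(α', β')` by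
`α' c · G(β' c d) ≤ α c · G(β c d) = z`, where `G(β c d) > 0` because `z > 0`.
-/

open Finset

theorem Finset.mul_inf'_eq_of_forall_mul_eq {ι : Type*} {s : Finset ι} (hs : s.Nonempty)
    {f : ι → ℝ} {a z : ℝ} (h : ∀ i ∈ s, a * f i = z) : a * s.inf' hs f = z := by
  obtain ⟨i, hi, hmin⟩ := s.exists_mem_eq_inf' hs f
  rw [hmin, h i hi]

section Objective

variable {C : Type*} [Fintype C] [Nonempty C] {U : C → Type*} [∀ c, Fintype (U c)]
  [∀ c, Nonempty (U c)] (G : (c : C) → U c → ℝ → ℝ → ℝ) (γ : C → ℝ)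

noncomputable def objective (α : C → ℝ) (β : (c : C) → U c → ℝ) : ℝ :=
  univ.inf' univ_nonempty fun c => α c * univ.inf' univ_nonempty fun d => G c d (γ c) (β c d)

theorem objective_eq_of_balanced {α : C → ℝ} {β : (c : C) → U c → ℝ} {z : ℝ}
    (hbal : ∀ c d, α c * G c d (γ c) (β c d) = z) : objective G γ α β = z := by
  unfold objective
  rw [inf'_congr univ_nonempty rfl fun c _ =>
    mul_inf'_eq_of_forall_mul_eq univ_nonempty fun d _ => hbal c d]
  exact inf'_const univ_nonempty z

theorem objective_le {α : C → ℝ} {β : (c : C) → U c → ℝ} (hα : ∀ c, 0 ≤ α c) (c : C) (d : U c) :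
    objective G γ α β ≤ α c * G c d (γ c) (β c d) :=
  calc objective G γ α β
      ≤ α c * univ.inf' univ_nonempty fun d => G c d (γ c) (β c d) := inf'_le _ (mem_univ c)
    _ ≤ α c * G c d (γ c) (β c d) := mul_le_mul_of_nonneg_left (inf'_le _ (mem_univ d)) (hα c)

end Objective

/-- **Proposition 3 (sufficiency of the balance condition).** If a feasible
solution `(α, β)` satisfies `α(c)·G_{c,d}(γ(c), β(c,d)) = z` for some `z > 0`,
all contexts `c` and all `d ∈ U_c`, then `(α, β)` is optimal for the objective
`V(α, β) = min_c α(c)·min_{d ∈ U_c} G_{c,d}(γ(c), β(c,d))`. -/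
theorem stmt_3 {C : Type*} [Fintype C] [Nonempty C]
    {U : C → Type*} [∀ c, Fintype (U c)] [∀ c, Nonempty (U c)]
    (γ : C → ℝ) (hγ : ∀ c, 0 < γ c ∧ γ c < 1)
    (G : (c : C) → U c → ℝ → ℝ → ℝ)
    (hGmono : ∀ (c : C) (d : U c) (x : ℝ), 0 ≤ x →
      MonotoneOn (fun y => G c d x y) (Set.Ici 0))
    (α : C → ℝ) (β : (c : C) → U c → ℝ)
    (hα : ∀ c, 0 ≤ α c) (hαsum : ∑ c, α c = 1)
    (hβ : ∀ c d, 0 ≤ β c d) (hβsum : ∀ c, ∑ d, β c d = 1 - γ c)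
    (z : ℝ) (hz : 0 < z)
    (hbal : ∀ (c : C) (d : U c), α c * G c d (γ c) (β c d) = z) :
    ∀ (α' : C → ℝ) (β' : (c : C) → U c → ℝ),
      (∀ c, 0 ≤ α' c) → (∑ c, α' c = 1) →
      (∀ c d, 0 ≤ β' c d) → (∀ c, ∑ d, β' c d = 1 - γ c) →
      univ.inf' univ_nonempty
          (fun c => α' c * univ.inf' univ_nonempty (fun d => G c d (γ c) (β' c d)))
        ≤ univ.inf' univ_nonempty
          (fun c => α c * univ.inf' univ_nonempty (fun d => G c d (γ c) (β c d))) := by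
  intro α' β' hα' hα'sum hβ' hβ'sum
  change objective G γ α' β' ≤ objective G γ α β
  obtain ⟨c, -, hαc⟩ := exists_le_of_sum_le univ_nonempty (hα'sum.trans hαsum.symm).le
  obtain ⟨d, -, hβd⟩ :=
    exists_le_of_sum_le univ_nonempty ((hβ'sum c).trans (hβsum c).symm).le
  have hG : 0 < G c d (γ c) (β c d) := pos_of_mul_pos_right (hbal c d ▸ hz) (hα c)
  calc objective G γ α' β'
      ≤ α' c * G c d (γ c) (β' c d) := objective_le G γ hα' c d
    _ ≤ α' c * G c d (γ c) (β c d) :=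
        mul_le_mul_of_nonneg_left (hGmono c d _ (hγ c).1.le (hβ' c d) (hβ c d) hβd) (hα' c)
    _ ≤ α c * G c d (γ c) (β c d) := mul_le_mul_of_nonneg_right hαc hG.le
    _ = objective G γ α β := (hbal c d).trans (objective_eq_of_balanced G γ hbal).symm
end

section
/- (Proposition 3, existence of a balanced optimal solution) There exist a feasible solution (α, β) and a real number z > 0 such that α(c)·G_{c,d}(γ(c), β(c, d)) = z for every c ∈ C and every d ∈ U_c, and this (α, β) maximizes V over all feasible solutions. -/
/-!
Within a context `c`, the minimum `min_d g_d(β_d)` of the gains attains a maximum `t_c > 0` on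
the compact simplex of budgets summing to `1 - γ(c)`. By the intermediate value theorem every
coordinate of a maximizer can be lowered until its gain is exactly `t_c`. Spreading the freed
budget evenly cannot push the minimum above `t_c`, so some gain is flat just to the right of its
level; being concave and monotone it is then flat from there on, and all the freed budget can be
given to it. Across contexts, weights `α(c) ∝ 1 / t_c` make every `α(c) · t_c` equal to one
value `z`, and any other weights satisfy `α'(c) ≤ α(c)` for some `c`, so their objective is at
most `α(c) · t_c = z`.
-/

open Finset

theorem ConcaveOn.eq_of_monotoneOn_of_eq {s : Set ℝ} {f : ℝ → ℝ} (hconc : ConcaveOn ℝ s f)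
    (hmono : MonotoneOn f s) {a b y : ℝ} (ha : a ∈ s) (hy : y ∈ s) (hab : a < b)
    (hby : b ≤ y) (hfab : f a = f b) : f y = f b := by
  rcases hby.eq_or_lt with rfl | hby
  · rfl
  have hb : b ∈ s := hconc.1.ordConnected.out ha hy ⟨hab.le, hby.le⟩
  have hslope := hconc.slope_anti_adjacent ha hy hab hby
  rw [hfab, sub_self, zero_div, div_nonpos_iff] at hslope
  have := hmono hb hy hby.le
  rcases hslope with h | h <;> [linarith [h.2, sub_pos.2 hby]; linarith [h.1]]

def allocations (D : Type*) [Fintype D] (S : ℝ) : Set (D → ℝ) :=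
  {β | (∀ d, 0 ≤ β d) ∧ ∑ d, β d = S}

section Allocation

variable {D : Type*} [Fintype D]

theorem isCompact_allocations (S : ℝ) : IsCompact (allocations D S) := by
  refine (isCompact_univ_pi fun _ => isCompact_Icc (a := 0) (b := S)).of_isClosed_subset ?_ ?_
  · have hcoord : ∀ d, Continuous fun β : D → ℝ => β d := continuous_apply
    simp only [allocations, Set.ofPred_and, Set.ofPred_forall]
    exact (isClosed_iInter fun d => isClosed_le continuous_const (hcoord d)).inter
      (isClosed_eq (continuous_finsetSum _ fun d _ => hcoord d) continuous_const)
  · rintro β ⟨hβ0, hβS⟩ d -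
    exact ⟨hβ0 d, hβS ▸ single_le_sum (fun d _ => hβ0 d) (mem_univ d)⟩

variable [Nonempty D]

theorem add_spread_mem_allocations {ψ : D → ℝ} (hψ : ∀ d, 0 ≤ ψ d) {S : ℝ}
    (hS : ∑ d, ψ d ≤ S) :
    (fun d => ψ d + (S - ∑ d, ψ d) / Fintype.card D) ∈ allocations D S := by
  have hn : (0 : ℝ) < Fintype.card D := Nat.cast_pos.2 Fintype.card_pos
  refine ⟨fun d => add_nonneg (hψ d) (div_nonneg (sub_nonneg.2 hS) hn.le), ?_⟩
  rw [sum_add_distrib, sum_const, card_univ, nsmul_eq_mul, mul_div_cancel₀ _ hn.ne']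
  ring

theorem spread_mem_allocations {S : ℝ} (hS : 0 ≤ S) :
    (fun _ => S / Fintype.card D) ∈ allocations D S := by
  simpa using add_spread_mem_allocations (ψ := 0) (fun _ => le_rfl) (by simpa using hS)

def minGain (g : D → ℝ → ℝ) (β : D → ℝ) : ℝ :=
  univ.inf' univ_nonempty fun d => g d (β d)

variable {g : D → ℝ → ℝ} {S : ℝ}

theorem exists_isMaxOn_minGain (hcont : ∀ d, ContinuousOn (g d) (Set.Ici 0)) (hS : 0 ≤ S) :
    ∃ B ∈ allocations D S, IsMaxOn (minGain g) (allocations D S) B := by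
  refine (isCompact_allocations S).exists_isMaxOn ⟨_, spread_mem_allocations hS⟩ ?_
  refine ContinuousOn.finset_inf'_apply univ_nonempty fun d _ => ?_
  exact (hcont d).comp (continuous_apply d).continuousOn fun β hβ => Set.mem_Ici.2 (hβ.1 d)

theorem minGain_pos_of_isMaxOn (hpos : ∀ d y, 0 < y → 0 < g d y) (hS : 0 < S) {B : D → ℝ}
    (hmax : IsMaxOn (minGain g) (allocations D S) B) : 0 < minGain g B := by
  have hn : (0 : ℝ) < Fintype.card D := Nat.cast_pos.2 Fintype.card_pos
  refine lt_of_lt_of_le ?_ (hmax (spread_mem_allocations hS.le))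
  exact (lt_inf'_iff _).2 fun d _ => hpos d _ (div_pos hS hn)

theorem exists_allocation_eq_of_isMaxOn (hcont : ∀ d, ContinuousOn (g d) (Set.Ici 0))
    (hconc : ∀ d, ConcaveOn ℝ (Set.Ici 0) (g d)) (hmono : ∀ d, MonotoneOn (g d) (Set.Ici 0))
    (hzero : ∀ d, g d 0 = 0) {B : D → ℝ} (hB : B ∈ allocations D S)
    (hmax : IsMaxOn (minGain g) (allocations D S) B) :
    ∃ β ∈ allocations D S, ∀ d, g d (β d) = minGain g B := by
  classical
  set t := minGain g B
  have ht : 0 ≤ t :=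
    le_inf' _ _ fun d _ => hzero d ▸ hmono d Set.self_mem_Ici (hB.1 d) (hB.1 d)
  have hlower : ∀ d, ∃ y ∈ Set.Icc 0 (B d), g d y = t := fun d =>
    intermediate_value_Icc (hB.1 d) ((hcont d).mono Set.Icc_subset_Ici_self)
      ⟨(hzero d).symm ▸ ht, inf'_le _ (mem_univ d)⟩
  choose ψ hψ hgψ using hlower
  have hψS : ∑ d, ψ d ≤ S := hB.2 ▸ sum_le_sum fun d _ => (hψ d).2
  set e := S - ∑ d, ψ d
  set n : ℝ := (Fintype.card D : ℝ)
  have he : 0 ≤ e := sub_nonneg.2 hψS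
  have hn : 1 ≤ n := Nat.one_le_cast.2 Fintype.card_pos
  -- Spreading the leftover budget evenly cannot raise the minimum, so some `g d₁` is flat
  -- just to the right of `ψ d₁`; concavity then makes it flat on all of `[ψ d₁, ∞)`.
  obtain ⟨d₁, -, hd₁⟩ := exists_mem_eq_inf' univ_nonempty fun d => g d (ψ d + e / n)
  have hflat : g d₁ (ψ d₁ + e / n) = t := by
    refine le_antisymm (hd₁ ▸ hmax (add_spread_mem_allocations (fun d => (hψ d).1) hψS)) ?_
    rw [← hgψ d₁]
    exact hmono d₁ (hψ d₁).1 (add_nonneg (hψ d₁).1 (by positivity))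
      (le_add_of_nonneg_right (by positivity))
  have hfar : g d₁ (ψ d₁ + e) = t := by
    rcases he.eq_or_lt with he0 | he0
    · rw [← he0, add_zero, hgψ]
    rw [← hflat]
    refine (hconc d₁).eq_of_monotoneOn_of_eq (hmono d₁) (hψ d₁).1
      (add_nonneg (hψ d₁).1 he) (lt_add_of_pos_right _ (by positivity))
      (by gcongr; exact div_le_self he hn)
      ((hgψ d₁).trans hflat.symm)
  refine ⟨ψ + Pi.single d₁ e, ⟨fun d => ?_, ?_⟩, fun d => ?_⟩
  · exact add_nonneg (hψ d).1 (by by_cases hd : d = d₁ <;> simp [hd, he])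
  · simp only [Pi.add_apply, sum_add_distrib, Fintype.sum_pi_single', e]
    ring
  · rcases eq_or_ne d d₁ with rfl | hd
    · simpa using hfar
    · simpa [hd] using hgψ d

theorem exists_balanced_allocation (hS : 0 < S) (hcont : ∀ d, ContinuousOn (g d) (Set.Ici 0))
    (hconc : ∀ d, ConcaveOn ℝ (Set.Ici 0) (g d)) (hmono : ∀ d, MonotoneOn (g d) (Set.Ici 0))
    (hzero : ∀ d, g d 0 = 0) (hpos : ∀ d y, 0 < y → 0 < g d y) :
    ∃ β ∈ allocations D S, ∃ t, 0 < t ∧ (∀ d, g d (β d) = t) ∧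
      ∀ β' ∈ allocations D S, minGain g β' ≤ t := by
  obtain ⟨B, hB, hmax⟩ := exists_isMaxOn_minGain hcont hS.le
  have ht := minGain_pos_of_isMaxOn hpos hS hmax
  obtain ⟨β, hβ, hgβ⟩ := exists_allocation_eq_of_isMaxOn hcont hconc hmono hzero hB hmax
  exact ⟨β, hβ, _, ht, hgβ, hmax⟩

end Allocation

section Weights

variable {C : Type*} [Fintype C] [Nonempty C]

theorem exists_weights_mul_eq {t : C → ℝ} (ht : ∀ c, 0 < t c) :
    ∃ (α : C → ℝ) (z : ℝ),
      (∀ c, 0 ≤ α c) ∧ ∑ c, α c = 1 ∧ 0 < z ∧ ∀ c, α c * t c = z := by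
  have hZ : 0 < ∑ c, (t c)⁻¹ := sum_pos (fun c _ => inv_pos.2 (ht c)) univ_nonempty
  refine ⟨fun c => (t c)⁻¹ / ∑ c, (t c)⁻¹, (∑ c, (t c)⁻¹)⁻¹,
    fun c => div_nonneg (inv_nonneg.2 (ht c).le) hZ.le, ?_, inv_pos.2 hZ, fun c => ?_⟩
  · rw [← sum_div, div_self hZ.ne']
  · field_simp [(ht c).ne']

theorem inf'_mul_le_of_sum_le {α α' m t : C → ℝ} {z : ℝ} (hα' : ∀ c, 0 ≤ α' c)
    (hsum : ∑ c, α' c ≤ ∑ c, α c) (hm : ∀ c, m c ≤ t c) (ht : ∀ c, 0 ≤ t c)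
    (hz : ∀ c, α c * t c = z) : univ.inf' univ_nonempty (fun c => α' c * m c) ≤ z := by
  obtain ⟨c, -, hc⟩ := exists_le_of_sum_le univ_nonempty hsum
  calc univ.inf' univ_nonempty (fun c => α' c * m c) ≤ α' c * m c := inf'_le _ (mem_univ c)
    _ ≤ α' c * t c := mul_le_mul_of_nonneg_left (hm c) (hα' c)
    _ ≤ α c * t c := mul_le_mul_of_nonneg_right hc (ht c)
    _ = z := hz c

end Weights

theorem stmt_4_general {C : Type*} [Fintype C] [Nonempty C]
    {U : C → Type*} [∀ c, Fintype (U c)] [∀ c, Nonempty (U c)]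
    (γ : C → ℝ) (hγ : ∀ c, 0 < γ c ∧ γ c < 1)
    (G : (c : C) → U c → ℝ → ℝ → ℝ)
    (hGcont : ∀ (c : C) (d : U c),
      ContinuousOn (fun y => G c d (γ c) y) (Set.Ici 0))
    (hGconc : ∀ (c : C) (d : U c),
      ConcaveOn ℝ (Set.Ici (0:ℝ)) (fun y => G c d (γ c) y))
    (hGmono : ∀ (c : C) (d : U c),
      MonotoneOn (fun y => G c d (γ c) y) (Set.Ici 0))
    (hGzero : ∀ (c : C) (d : U c), G c d (γ c) 0 = 0)
    (hGpos : ∀ (c : C) (d : U c) (y : ℝ), 0 < y → 0 < G c d (γ c) y) :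
    ∃ (α : C → ℝ) (β : (c : C) → U c → ℝ) (z : ℝ),
      (∀ c, 0 ≤ α c) ∧ (∑ c, α c = 1) ∧
      (∀ c d, 0 ≤ β c d) ∧ (∀ c, ∑ d, β c d = 1 - γ c) ∧
      0 < z ∧ (∀ (c : C) (d : U c), α c * G c d (γ c) (β c d) = z) ∧
      (∀ (α' : C → ℝ) (β' : (c : C) → U c → ℝ),
        (∀ c, 0 ≤ α' c) → (∑ c, α' c = 1) →
        (∀ c d, 0 ≤ β' c d) → (∀ c, ∑ d, β' c d = 1 - γ c) →
        univ.inf' univ_nonempty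
            (fun c => α' c * univ.inf' univ_nonempty (fun d => G c d (γ c) (β' c d)))
          ≤ univ.inf' univ_nonempty
            (fun c => α c * univ.inf' univ_nonempty (fun d => G c d (γ c) (β c d)))) := by
  choose β hβ t ht hGβ hopt using fun c => exists_balanced_allocation
    (sub_pos.2 (hγ c).2) (hGcont c) (hGconc c) (hGmono c) (hGzero c) (hGpos c)
  obtain ⟨α, z, hα, hαsum, hz, hαt⟩ := exists_weights_mul_eq ht
  have hV : univ.inf' univ_nonempty
      (fun c => α c * univ.inf' univ_nonempty (fun d => G c d (γ c) (β c d))) = z := by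
    simp only [hGβ, inf'_const, hαt]
  refine ⟨α, β, z, hα, hαsum, fun c => (hβ c).1, fun c => (hβ c).2, hz,
    fun c d => by rw [hGβ, hαt], ?_⟩
  intro α' β' hα' hα'sum hβ' hβ'sum
  rw [hV]
  exact inf'_mul_le_of_sum_le hα' (hα'sum.trans hαsum.symm).le
    (fun c => hopt c (β' c) ⟨hβ' c, hβ'sum c⟩) (fun c => (ht c).le) hαt

/-- **Proposition 3 (existence of a balanced optimal solution).** There exist a
feasible solution `(α, β)` and `z > 0` with `α(c)·G_{c,d}(γ(c), β(c,d)) = z` for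
every context `c` and every `d ∈ U_c`, and this `(α, β)` maximizes the objective
`V(α, β) = min_c α(c)·min_{d ∈ U_c} G_{c,d}(γ(c), β(c,d))` over all feasible
solutions. -/
theorem stmt_4 {C : Type*} [Fintype C] [Nonempty C]
    {U : C → Type*} [∀ c, Fintype (U c)] [∀ c, Nonempty (U c)]
    (γ : C → ℝ) (hγ : ∀ c, 0 < γ c ∧ γ c < 1)
    (G : (c : C) → U c → ℝ → ℝ → ℝ)
    (hGnonneg : ∀ (c : C) (d : U c) (x y : ℝ), 0 ≤ x → 0 ≤ y → 0 ≤ G c d x y)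
    (hGcont : ∀ (c : C) (d : U c),
      ContinuousOn (fun y => G c d (γ c) y) (Set.Ici 0))
    (hGconc : ∀ (c : C) (d : U c),
      ConcaveOn ℝ (Set.Ici (0:ℝ)) (fun y => G c d (γ c) y))
    (hGmono : ∀ (c : C) (d : U c),
      MonotoneOn (fun y => G c d (γ c) y) (Set.Ici 0))
    (hGzero : ∀ (c : C) (d : U c), G c d (γ c) 0 = 0)
    (hGpos : ∀ (c : C) (d : U c) (y : ℝ), 0 < y → 0 < G c d (γ c) y) :
    ∃ (α : C → ℝ) (β : (c : C) → U c → ℝ) (z : ℝ),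
      (∀ c, 0 ≤ α c) ∧ (∑ c, α c = 1) ∧
      (∀ c d, 0 ≤ β c d) ∧ (∀ c, ∑ d, β c d = 1 - γ c) ∧
      0 < z ∧ (∀ (c : C) (d : U c), α c * G c d (γ c) (β c d) = z) ∧
      (∀ (α' : C → ℝ) (β' : (c : C) → U c → ℝ),
        (∀ c, 0 ≤ α' c) → (∑ c, α' c = 1) →
        (∀ c d, 0 ≤ β' c d) → (∀ c, ∑ d, β' c d = 1 - γ c) →
        univ.inf' univ_nonempty
            (fun c => α' c * univ.inf' univ_nonempty (fun d => G c d (γ c) (β' c d)))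
          ≤ univ.inf' univ_nonempty
            (fun c => α c * univ.inf' univ_nonempty (fun d => G c d (γ c) (β c d)))) :=
  stmt_4_general γ hγ G hGcont hGconc hGmono hGzero hGpos
end

section
/- (Proposition 5, necessary balance condition for top-m selection) If a feasible solution (α, β) maximizes W over all feasible solutions, then there exists a real number z > 0 such that for every c ∈ C, every d ∈ P_c and every d' ∈ U_c: min_{d̃ ∈ P_c} α(c)·G_{c,d̃,d'}(β(c, d̃), β(c, d')) = z and min_{d̃' ∈ U_c} α(c)·G_{c,d,d̃'}(β(c, d), β(c, d̃')) = z. -/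
/-!
At a maximizer the optimum `W*` is positive (compare with the barycentre), so every `β c x` and
every `α c` is positive. Each product `α c · pairMin_c` equals `W*`: otherwise the weights
`α' c ∝ 1 / pairMin_c` make all products strictly larger than `W*`. Moreover every design `x₀` of
context `c` lies in a pair attaining `pairMin_c`: otherwise moving a small mass `ε` from `x₀` to
all designs in proportion to `β c` raises `pairMin_c` (pairs avoiding `x₀` are scaled by `1 + ε`
by homogeneity, pairs through `x₀` stay above the minimum by continuity), and re-weighting `α`
again beats `W*`. Both balance equations follow with `z = W*`.
-/

open Finset

/-- The objective `W(α, β) = min_c α(c) · min_{(d,d') ∈ P_c × U_c}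
G_{c,d,d'}(β(c,d), β(c,d'))` for the contextual top-`m` problem, where the
design set under context `c` is the disjoint union `P c ⊕ U c`. -/
noncomputable def topmObjective {C : Type*} [Fintype C] [Nonempty C]
    {P U : C → Type*} [∀ c, Fintype (P c)] [∀ c, Nonempty (P c)]
    [∀ c, Fintype (U c)] [∀ c, Nonempty (U c)]
    (G : (c : C) → P c → U c → ℝ → ℝ → ℝ)
    (α : C → ℝ) (β : (c : C) → (P c ⊕ U c) → ℝ) : ℝ :=
  univ.inf' univ_nonempty (fun c =>
    α c * univ.inf' univ_nonempty (fun p : P c × U c =>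
      G c p.1 p.2 (β c (Sum.inl p.1)) (β c (Sum.inr p.2))))

open Filter Topology

lemma exists_mem_stdSimplex_lt_mul {ι : Type*} [Fintype ι] [Nonempty ι] {α M : ι → ℝ} {W : ℝ}
    (hα : α ∈ stdSimplex ℝ ι) (hM : ∀ i, 0 < M i) (hW : ∀ i, W ≤ α i * M i) {i₀ : ι}
    (hi₀ : W < α i₀ * M i₀) : ∃ α' ∈ stdSimplex ℝ ι, ∀ i, W < α' i * M i := by
  set S := ∑ i, (M i)⁻¹
  have hS : 0 < S := Finset.sum_pos (fun i _ => inv_pos.2 (hM i)) univ_nonempty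
  have hWS : W * S < 1 := by
    rw [Finset.mul_sum, ← hα.2]
    refine Finset.sum_lt_sum (fun i _ => ?_) ⟨i₀, mem_univ _, ?_⟩
    · rw [← div_eq_mul_inv, div_le_iff₀ (hM i)]; exact hW i
    · rw [← div_eq_mul_inv, div_lt_iff₀ (hM i₀)]; exact hi₀
  refine ⟨fun i => (M i)⁻¹ / S,
    ⟨fun i => (div_pos (inv_pos.2 (hM i)) hS).le, by rw [← Finset.sum_div, div_self hS.ne']⟩,
    fun i => ?_⟩
  rwa [div_mul_eq_mul_div, inv_mul_cancel₀ (hM i).ne', lt_div_iff₀ hS]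

lemma stdSimplex.barycenter_apply_pos {ι : Type*} [Fintype ι] [Nonempty ι] (i : ι) :
    0 < (stdSimplex.barycenter : stdSimplex ℝ ι).1 i :=
  inv_pos.2 (Nat.cast_pos.2 Fintype.card_pos)

lemma inf'_mul_eq_of_le_of_exists_le {ι : Type*} [Fintype ι] [Nonempty ι] {f : ι → ℝ} {a m : ℝ}
    (ha : 0 ≤ a) (hle : ∀ i, m ≤ f i) (hex : ∃ i, f i ≤ m) :
    univ.inf' univ_nonempty (fun i => a * f i) = a * m := by
  obtain ⟨i₀, hi₀⟩ := hex
  refine le_antisymm ?_ (le_inf' _ _ fun i _ => mul_le_mul_of_nonneg_left (hle i) ha)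
  exact (inf'_le _ (mem_univ i₀)).trans (mul_le_mul_of_nonneg_left hi₀ ha)

section pairMin

variable {P U : Type*} [Fintype P] [Nonempty P] [Fintype U] [Nonempty U]

noncomputable def pairMin (g : P → U → ℝ → ℝ → ℝ) (b : P ⊕ U → ℝ) : ℝ :=
  univ.inf' univ_nonempty (fun p : P × U => g p.1 p.2 (b (Sum.inl p.1)) (b (Sum.inr p.2)))

lemma pairMin_le (g : P → U → ℝ → ℝ → ℝ) (b : P ⊕ U → ℝ) (d : P) (d' : U) :
    pairMin g b ≤ g d d' (b (Sum.inl d)) (b (Sum.inr d')) :=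
  inf'_le _ (mem_univ (d, d'))

lemma pos_of_pairMin_pos {g : P → U → ℝ → ℝ → ℝ}
    (hzero₁ : ∀ d d' y, 0 ≤ y → g d d' 0 y = 0) (hzero₂ : ∀ d d' x, 0 ≤ x → g d d' x 0 = 0)
    {b : P ⊕ U → ℝ} (hb : ∀ x, 0 ≤ b x) (hmin : 0 < pairMin g b) (x : P ⊕ U) : 0 < b x := by
  refine (hb x).lt_of_ne fun hx => hmin.not_ge ?_
  rcases x with d | d'
  · obtain ⟨d'⟩ := ‹Nonempty U›
    simpa [← hx, hzero₁ d d' _ (hb _)] using pairMin_le g b d d'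
  · obtain ⟨d⟩ := ‹Nonempty P›
    simpa [← hx, hzero₂ d d' _ (hb _)] using pairMin_le g b d d'

lemma exists_mem_stdSimplex_pairMin_lt {g : P → U → ℝ → ℝ → ℝ}
    (hcont : ∀ d d', ContinuousOn (fun q : ℝ × ℝ => g d d' q.1 q.2) (Set.Ici 0 ×ˢ Set.Ici 0))
    (hhom : ∀ d d' (h x y : ℝ), 0 ≤ h → 0 ≤ x → 0 ≤ y → g d d' (h * x) (h * y) = h * g d d' x y)
    {b : P ⊕ U → ℝ} (hb : b ∈ stdSimplex ℝ (P ⊕ U)) (hbpos : ∀ x, 0 < b x)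
    (hmin : 0 < pairMin g b) (x₀ : P ⊕ U)
    (hx₀ : ∀ d d', (Sum.inl d = x₀ ∨ Sum.inr d' = x₀) →
      pairMin g b < g d d' (b (Sum.inl d)) (b (Sum.inr d'))) :
    ∃ b' ∈ stdSimplex ℝ (P ⊕ U), pairMin g b < pairMin g b' := by
  classical
  set b' : ℝ → P ⊕ U → ℝ := fun ε x => (1 + ε) * b x - if x = x₀ then ε else 0 with hb'
  have hb'_tendsto : ∀ x, Tendsto (fun ε => b' ε x) (𝓝 0) (𝓝 (b x)) := by
    intro x
    have : Continuous fun ε => b' ε x := by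
      by_cases hx : x = x₀ <;> simp only [hb', hx, if_true, if_false] <;> fun_prop
    simpa [hb'] using this.tendsto 0
  have hb'_sum : ∀ ε, ∑ x, b' ε x = 1 := by
    intro ε
    simp [hb', Finset.sum_sub_distrib, ← Finset.mul_sum, hb.2]
  have hb'_pos : ∀ᶠ ε in 𝓝 0, ∀ x, 0 < b' ε x :=
    eventually_all.2 fun x => (hb'_tendsto x).eventually_const_lt (hbpos x)
  have hb'_pair : ∀ p : P × U, ∀ᶠ ε in 𝓝[>] 0,
      pairMin g b < g p.1 p.2 (b' ε (Sum.inl p.1)) (b' ε (Sum.inr p.2)) := by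
    rintro ⟨d, d'⟩
    by_cases hd : Sum.inl d = x₀ ∨ Sum.inr d' = x₀
    · have hg : ContinuousAt (fun q : ℝ × ℝ => g d d' q.1 q.2) (b (Sum.inl d), b (Sum.inr d')) :=
        (hcont d d').continuousAt
          (prod_mem_nhds (Ici_mem_nhds (hbpos _)) (Ici_mem_nhds (hbpos _)))
      exact nhdsWithin_le_nhds <| (hg.tendsto.comp ((hb'_tendsto _).prodMk_nhds
        (hb'_tendsto _))).eventually_const_lt (hx₀ d d' hd)
    · rw [not_or] at hd
      filter_upwards [self_mem_nhdsWithin] with ε (hε : 0 < ε)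
      simp only [hb', if_neg hd.1, if_neg hd.2, sub_zero]
      rw [hhom d d' _ _ _ (by linarith) (hbpos _).le (hbpos _).le]
      calc pairMin g b < (1 + ε) * pairMin g b := by nlinarith
        _ ≤ (1 + ε) * g d d' (b (Sum.inl d)) (b (Sum.inr d')) := by
          gcongr; exact pairMin_le g b d d'
  obtain ⟨ε, hε_pos, hε_pair⟩ :=
    ((hb'_pos.filter_mono nhdsWithin_le_nhds).and (eventually_all.2 hb'_pair)).exists
  exact ⟨b' ε, ⟨fun x => (hε_pos x).le, hb'_sum ε⟩, (lt_inf'_iff _).2 fun p _ => hε_pair p⟩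

end pairMin

section topm

variable {C : Type*} [Fintype C] [Nonempty C]
    {P U : C → Type*} [∀ c, Fintype (P c)] [∀ c, Nonempty (P c)]
    [∀ c, Fintype (U c)] [∀ c, Nonempty (U c)]
    {G : (c : C) → P c → U c → ℝ → ℝ → ℝ} {α : C → ℝ} {β : (c : C) → (P c ⊕ U c) → ℝ}

lemma topmObjective_le_mul_pairMin (c : C) :
    topmObjective G α β ≤ α c * pairMin (G c) (β c) :=
  inf'_le _ (mem_univ c)

lemma lt_topmObjective_iff {W : ℝ} :
    W < topmObjective G α β ↔ ∀ c, W < α c * pairMin (G c) (β c) := by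
  simp [topmObjective, pairMin, lt_inf'_iff]

variable (G α β) in
def IsTopmMaximizer : Prop :=
  α ∈ stdSimplex ℝ C ∧ (∀ c, β c ∈ stdSimplex ℝ (P c ⊕ U c)) ∧
    ∀ α' β', α' ∈ stdSimplex ℝ C → (∀ c, β' c ∈ stdSimplex ℝ (P c ⊕ U c)) →
      topmObjective G α' β' ≤ topmObjective G α β

namespace IsTopmMaximizer

lemma topmObjective_pos (hGpos : ∀ c d d' (x y : ℝ), 0 < x → 0 < y → 0 < G c d d' x y)
    (hmax : IsTopmMaximizer G α β) : 0 < topmObjective G α β := by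
  refine lt_of_lt_of_le ?_ (hmax.2.2 _ _ stdSimplex.barycenter.2 fun c => stdSimplex.barycenter.2)
  refine lt_topmObjective_iff.2 fun c => mul_pos (stdSimplex.barycenter_apply_pos c) ?_
  exact (lt_inf'_iff _).2 fun p _ => hGpos c p.1 p.2 _ _ (stdSimplex.barycenter_apply_pos _)
    (stdSimplex.barycenter_apply_pos _)

lemma mul_pairMin_le (hmax : IsTopmMaximizer G α β) (hW : 0 < topmObjective G α β)
    {β' : (c : C) → (P c ⊕ U c) → ℝ} (hβ' : ∀ c, β' c ∈ stdSimplex ℝ (P c ⊕ U c))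
    (hle : ∀ c, topmObjective G α β ≤ α c * pairMin (G c) (β' c)) (c : C) :
    α c * pairMin (G c) (β' c) ≤ topmObjective G α β := by
  by_contra! hlt
  have hM : ∀ c, 0 < pairMin (G c) (β' c) := fun c =>
    pos_of_mul_pos_right (hW.trans_le (hle c)) (hmax.1.1 c)
  obtain ⟨α', hα', hα'_lt⟩ := exists_mem_stdSimplex_lt_mul hmax.1 hM hle hlt
  exact (hmax.2.2 α' β' hα' hβ').not_gt (lt_topmObjective_iff.2 hα'_lt)

lemma mul_pairMin_eq (hmax : IsTopmMaximizer G α β) (hW : 0 < topmObjective G α β) (c : C) :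
    α c * pairMin (G c) (β c) = topmObjective G α β :=
  le_antisymm (hmax.mul_pairMin_le hW hmax.2.1 topmObjective_le_mul_pairMin c)
    (topmObjective_le_mul_pairMin c)

lemma pairMin_pos (hmax : IsTopmMaximizer G α β) (hW : 0 < topmObjective G α β) (c : C) :
    0 < pairMin (G c) (β c) :=
  pos_of_mul_pos_right ((hmax.mul_pairMin_eq hW c).symm ▸ hW) (hmax.1.1 c)

lemma allocation_pos (hzero₁ : ∀ c d d' (y : ℝ), 0 ≤ y → G c d d' 0 y = 0)
    (hzero₂ : ∀ c d d' (x : ℝ), 0 ≤ x → G c d d' x 0 = 0)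
    (hmax : IsTopmMaximizer G α β) (hW : 0 < topmObjective G α β) (c : C) (x : P c ⊕ U c) :
    0 < β c x :=
  pos_of_pairMin_pos (hzero₁ c) (hzero₂ c) (hmax.2.1 c).1 (hmax.pairMin_pos hW c) x

lemma exists_le_pairMin
    (hGcont : ∀ c d d', ContinuousOn (fun q : ℝ × ℝ => G c d d' q.1 q.2) (Set.Ici 0 ×ˢ Set.Ici 0))
    (hGhom : ∀ c d d' (h x y : ℝ), 0 ≤ h → 0 ≤ x → 0 ≤ y →
      G c d d' (h * x) (h * y) = h * G c d d' x y)
    (hmax : IsTopmMaximizer G α β) (hW : 0 < topmObjective G α β) (hβ : ∀ c x, 0 < β c x)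
    (c : C) (x₀ : P c ⊕ U c) :
    ∃ d d', (Sum.inl d = x₀ ∨ Sum.inr d' = x₀) ∧
      G c d d' (β c (Sum.inl d)) (β c (Sum.inr d')) ≤ pairMin (G c) (β c) := by
  classical
  by_contra! hx₀
  have hprod := hmax.mul_pairMin_eq hW c
  have hmin := hmax.pairMin_pos hW c
  have hα : 0 < α c := pos_of_mul_pos_left (hprod ▸ hW) hmin.le
  obtain ⟨b, hb, hlt⟩ :=
    exists_mem_stdSimplex_pairMin_lt (hGcont c) (hGhom c) (hmax.2.1 c) (hβ c) hmin x₀ hx₀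
  have hβ' : ∀ c', Function.update β c b c' ∈ stdSimplex ℝ (P c' ⊕ U c') := by
    intro c'
    rcases eq_or_ne c' c with rfl | hc
    · simpa using hb
    · simpa [hc] using hmax.2.1 c'
  have hle : ∀ c', topmObjective G α β ≤ α c' * pairMin (G c') (Function.update β c b c') := by
    intro c'
    rcases eq_or_ne c' c with rfl | hc
    · simpa [← hprod] using mul_le_mul_of_nonneg_left hlt.le hα.le
    · simpa [hc] using topmObjective_le_mul_pairMin c'
  have := hmax.mul_pairMin_le hW hβ' hle c
  simp only [Function.update_self, ← hprod] at this
  exact this.not_gt (mul_lt_mul_of_pos_left hlt hα)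

end IsTopmMaximizer

end topm

theorem stmt_6_general {C : Type*} [Fintype C] [Nonempty C]
    {P U : C → Type*} [∀ c, Fintype (P c)] [∀ c, Nonempty (P c)]
    [∀ c, Fintype (U c)] [∀ c, Nonempty (U c)]
    (G : (c : C) → P c → U c → ℝ → ℝ → ℝ)
    (hGcont : ∀ (c : C) (d : P c) (d' : U c),
      ContinuousOn (fun p : ℝ × ℝ => G c d d' p.1 p.2) (Set.Ici 0 ×ˢ Set.Ici 0))
    (hGhom : ∀ (c : C) (d : P c) (d' : U c) (h x y : ℝ),
      0 ≤ h → 0 ≤ x → 0 ≤ y → G c d d' (h * x) (h * y) = h * G c d d' x y)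
    (hGzero1 : ∀ (c : C) (d : P c) (d' : U c) (y : ℝ), 0 ≤ y → G c d d' 0 y = 0)
    (hGzero2 : ∀ (c : C) (d : P c) (d' : U c) (x : ℝ), 0 ≤ x → G c d d' x 0 = 0)
    (hGpos : ∀ (c : C) (d : P c) (d' : U c) (x y : ℝ), 0 < x → 0 < y →
      0 < G c d d' x y)
    (α : C → ℝ) (β : (c : C) → (P c ⊕ U c) → ℝ)
    (hα : ∀ c, 0 ≤ α c) (hαsum : ∑ c, α c = 1)
    (hβ : ∀ c d, 0 ≤ β c d) (hβsum : ∀ c, ∑ d, β c d = 1)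
    (hopt : ∀ (α' : C → ℝ) (β' : (c : C) → (P c ⊕ U c) → ℝ),
      (∀ c, 0 ≤ α' c) → (∑ c, α' c = 1) →
      (∀ c d, 0 ≤ β' c d) → (∀ c, ∑ d, β' c d = 1) →
      topmObjective G α' β' ≤ topmObjective G α β) :
    ∃ z : ℝ, 0 < z ∧
      ∀ (c : C) (d : P c) (d' : U c),
        (univ.inf' univ_nonempty
          (fun dt : P c => α c * G c dt d' (β c (Sum.inl dt)) (β c (Sum.inr d'))) = z) ∧
        (univ.inf' univ_nonempty
          (fun dt' : U c => α c * G c d dt' (β c (Sum.inl d)) (β c (Sum.inr dt'))) = z) := by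
  have hmax : IsTopmMaximizer G α β := ⟨⟨hα, hαsum⟩, fun c => ⟨hβ c, hβsum c⟩,
    fun α' β' hα' hβ' => hopt α' β' hα'.1 hα'.2 (fun c => (hβ' c).1) fun c => (hβ' c).2⟩
  have hW := hmax.topmObjective_pos hGpos
  have hβpos := hmax.allocation_pos hGzero1 hGzero2 hW
  refine ⟨topmObjective G α β, hW, fun c d d' => ⟨?_, ?_⟩⟩ <;> rw [← hmax.mul_pairMin_eq hW c]
  · obtain ⟨d₁, d₁', hd | hd, hle⟩ := hmax.exists_le_pairMin hGcont hGhom hW hβpos c (Sum.inr d')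
    · cases hd
    · cases hd
      exact inf'_mul_eq_of_le_of_exists_le (hα c) (fun _ => pairMin_le _ _ _ _) ⟨d₁, hle⟩
  · obtain ⟨d₁, d₁', hd | hd, hle⟩ := hmax.exists_le_pairMin hGcont hGhom hW hβpos c (Sum.inl d)
    · cases hd
      exact inf'_mul_eq_of_le_of_exists_le (hα c) (fun _ => pairMin_le _ _ _ _) ⟨d₁', hle⟩
    · cases hd

/-- **Proposition 5 (necessary balance condition for top-`m` selection).**
If a feasible `(α, β)` maximizes `W`, then there is `z > 0` such that for every
context `c`, every `d ∈ P_c` and every `d' ∈ U_c`: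
`min_{d̃ ∈ P_c} α(c)·G_{c,d̃,d'}(β(c,d̃), β(c,d')) = z` and
`min_{d̃' ∈ U_c} α(c)·G_{c,d,d̃'}(β(c,d), β(c,d̃')) = z`. -/
theorem stmt_6 {C : Type*} [Fintype C] [Nonempty C]
    {P U : C → Type*} [∀ c, Fintype (P c)] [∀ c, Nonempty (P c)]
    [∀ c, Fintype (U c)] [∀ c, Nonempty (U c)]
    (G : (c : C) → P c → U c → ℝ → ℝ → ℝ)
    (hGconc : ∀ (c : C) (d : P c) (d' : U c),
      ConcaveOn ℝ (Set.Ici (0:ℝ) ×ˢ Set.Ici (0:ℝ)) (fun p : ℝ × ℝ => G c d d' p.1 p.2))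
    (hGcont : ∀ (c : C) (d : P c) (d' : U c),
      ContinuousOn (fun p : ℝ × ℝ => G c d d' p.1 p.2) (Set.Ici 0 ×ˢ Set.Ici 0))
    (hGmono1 : ∀ (c : C) (d : P c) (d' : U c) (y : ℝ), 0 ≤ y →
      MonotoneOn (fun x => G c d d' x y) (Set.Ici 0))
    (hGmono2 : ∀ (c : C) (d : P c) (d' : U c) (x : ℝ), 0 ≤ x →
      MonotoneOn (fun y => G c d d' x y) (Set.Ici 0))
    (hGhom : ∀ (c : C) (d : P c) (d' : U c) (h x y : ℝ),
      0 ≤ h → 0 ≤ x → 0 ≤ y → G c d d' (h * x) (h * y) = h * G c d d' x y)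
    (hGzero1 : ∀ (c : C) (d : P c) (d' : U c) (y : ℝ), 0 ≤ y → G c d d' 0 y = 0)
    (hGzero2 : ∀ (c : C) (d : P c) (d' : U c) (x : ℝ), 0 ≤ x → G c d d' x 0 = 0)
    (hGpos : ∀ (c : C) (d : P c) (d' : U c) (x y : ℝ), 0 < x → 0 < y →
      0 < G c d d' x y)
    (α : C → ℝ) (β : (c : C) → (P c ⊕ U c) → ℝ)
    (hα : ∀ c, 0 ≤ α c) (hαsum : ∑ c, α c = 1)
    (hβ : ∀ c d, 0 ≤ β c d) (hβsum : ∀ c, ∑ d, β c d = 1)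
    (hopt : ∀ (α' : C → ℝ) (β' : (c : C) → (P c ⊕ U c) → ℝ),
      (∀ c, 0 ≤ α' c) → (∑ c, α' c = 1) →
      (∀ c d, 0 ≤ β' c d) → (∀ c, ∑ d, β' c d = 1) →
      topmObjective G α' β' ≤ topmObjective G α β) :
    ∃ z : ℝ, 0 < z ∧
      ∀ (c : C) (d : P c) (d' : U c),
        (univ.inf' univ_nonempty
          (fun dt : P c => α c * G c dt d' (β c (Sum.inl dt)) (β c (Sum.inr d'))) = z) ∧
        (univ.inf' univ_nonempty
          (fun dt' : U c => α c * G c d dt' (β c (Sum.inl d)) (β c (Sum.inr dt'))) = z) :=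
  stmt_6_general G hGcont hGhom hGzero1 hGzero2 hGpos α β hα hαsum hβ hβsum hopt
end

section
/- (Proposition 6, necessary optimality conditions for Gaussian designs) Suppose ψ : D → [0,∞) with Σ_{d ∈ D} ψ(d) = 1 maximizes ψ ↦ min_{(d,d') ∈ P × U} G_{d,d'}(ψ(d), ψ(d')) over all such ψ. Then there exist z > 0 and a type vector ϑ : P × U → {0,1} such that: (i) for every d ∈ P there exists d' ∈ U with ϑ(d, d') = 1, and for every d' ∈ U there exists d ∈ P with ϑ(d, d') = 1; (ii) for all (d, d') ∈ P × U, G_{d,d'}(ψ(d), ψ(d')) ≥ z, with equality if and only if ϑ(d, d') = 1; and (iii) for every equivalence class E of the smallest equivalence relation on D containing all pairs {d, d'} with ϑ(d, d') = 1, one has Σ_{d ∈ P ∩ E} (ψ(d)/σ(d))² = Σ_{d' ∈ U ∩ E} (ψ(d')/σ(d'))². -/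
/-!
Write `G_{d,d'}(x, y) = c / (σ(d)² / x + σ(d')² / y)` and call a pair tight when it attains the
minimum `z`. At an optimal design every weight is positive (else `z = 0`, worse than the uniform
design), and no direction `η` with `∑ η = 0` can raise the rate of every tight pair to first order:
for a small step the non-tight pairs stay above `z`, so the minimum would increase. The first-order
change of a tight pair has the sign of its gain `σ(d)² η(d) / ψ(d)² + σ(d')² η(d') / ψ(d')²`, and
`η = ψ` has positive gain everywhere, so it is enough to exhibit `η` with `∑ η < 0` and nonnegative
gain on tight pairs. Taking mass from a point lying on no tight pair gives (i); shifting mass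
proportional to `(ψ / σ)²` between the `P`- and `U`-sides of an unbalanced class of the tight graph
gives (iii).
-/

open Finset Classical Filter Topology

theorem HasDerivAt.eventually_lt_of_deriv_pos {f : ℝ → ℝ} {f' x : ℝ}
    (hf : HasDerivAt f f' x) (hf' : 0 < f') : ∀ᶠ y in 𝓝[>] x, f x < f y := by
  filter_upwards [(hasDerivAt_iff_tendsto_slope.mp hf).mono_left (nhdsGT_le_nhdsNE x)
    |>.eventually (eventually_gt_nhds hf'), self_mem_nhdsWithin] with y hslope hy
  rw [slope_def_field] at hslope
  exact sub_pos.mp ((div_pos_iff_of_pos_right (sub_pos.mpr hy)).mp hslope)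

theorem Finset.eventually_inf'_lt_inf' {ι α β : Type*} [LinearOrder α] [TopologicalSpace α]
    [OrderTopology α] {s : Finset ι} (hs : s.Nonempty) {l : Filter β} {f : ι → β → α}
    {g : ι → α} (hf : ∀ i ∈ s, Tendsto (f i) l (𝓝 (g i)))
    (hmin : ∀ i ∈ s, g i = s.inf' hs g → ∀ᶠ x in l, g i < f i x) :
    ∀ᶠ x in l, s.inf' hs g < s.inf' hs fun i => f i x := by
  simp_rw [Finset.lt_inf'_iff]
  refine (eventually_all_finset s).2 fun i hi => ?_
  rcases (s.inf'_le g hi).eq_or_lt with h | h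
  · exact h ▸ hmin i hi h.symm
  · exact (hf i hi).eventually (lt_mem_nhds h)

theorem const_card_inv_mem_stdSimplex {𝕜 : Type*} [Field 𝕜] [LinearOrder 𝕜]
    [IsStrictOrderedRing 𝕜] (ι : Type*) [Fintype ι] [Nonempty ι] :
    (fun _ => (Fintype.card ι : 𝕜)⁻¹) ∈ stdSimplex 𝕜 ι :=
  ⟨fun _ => by positivity, by simp⟩

theorem Relation.EqvGen.iff_of_rel {α : Type*} {r : α → α → Prop} {a b c : α} (h : r b c) :
    Relation.EqvGen r a b ↔ Relation.EqvGen r a c :=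
  ⟨fun hb => hb.trans _ _ _ (.rel _ _ h), fun hc => hc.trans _ _ _ (.symm _ _ (.rel _ _ h))⟩

lemma hasDerivAt_rate_comp_line (c a b x y α β : ℝ) (h : a * y + b * x ≠ 0) :
    HasDerivAt (fun t => c * (x + t * α) * (y + t * β) / (a * (y + t * β) + b * (x + t * α)))
      (c * (a * α * y ^ 2 + b * β * x ^ 2) / (a * y + b * x) ^ 2) 0 := by
  have hx : HasDerivAt (fun t : ℝ => x + t * α) α 0 := by
    simpa using ((hasDerivAt_id (0:ℝ)).mul_const α).const_add x
  have hy : HasDerivAt (fun t : ℝ => y + t * β) β 0 := by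
    simpa using ((hasDerivAt_id (0:ℝ)).mul_const β).const_add y
  refine (((hx.const_mul c).fun_mul hy).fun_div ((hy.const_mul a).fun_add (hx.const_mul b))
    (by simpa using h)).congr_deriv ?_
  simp only [zero_mul, add_zero]
  ring

lemma tendsto_rate_comp_line {c a b x y : ℝ} (α β : ℝ) (h : a * y + b * x ≠ 0) :
    Tendsto (fun t => c * (x + t * α) * (y + t * β) / (a * (y + t * β) + b * (x + t * α)))
      (𝓝[>] 0) (𝓝 (c * x * y / (a * y + b * x))) := by
  simpa using ((hasDerivAt_rate_comp_line c a b x y α β h).continuousAt.tendsto).mono_left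
    nhdsWithin_le_nhds

/-- The rate is `c / (a / x + b / y)`, and `hαβ` says that `a / x + b / y` decreases to first
order along `(α, β)`. -/
lemma eventually_rate_lt_rate_comp_line {c a b x y α β : ℝ} (hc : 0 < c) (ha : 0 < a)
    (hb : 0 < b) (hx : 0 < x) (hy : 0 < y) (hαβ : 0 < a * α / x ^ 2 + b * β / y ^ 2) :
    ∀ᶠ t in 𝓝[>] 0, c * x * y / (a * y + b * x) <
      c * (x + t * α) * (y + t * β) / (a * (y + t * β) + b * (x + t * α)) := by
  have hderiv : 0 < c * (a * α * y ^ 2 + b * β * x ^ 2) / (a * y + b * x) ^ 2 := by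
    have : a * α * y ^ 2 + b * β * x ^ 2 = x ^ 2 * y ^ 2 * (a * α / x ^ 2 + b * β / y ^ 2) := by
      field_simp
    rw [this]
    positivity
  simpa using (hasDerivAt_rate_comp_line c a b x y α β (by positivity)).eventually_lt_of_deriv_pos
    hderiv

section Design

variable {P U : Type*} [Fintype P] [Nonempty P] [Fintype U] [Nonempty U]
  {μ σ ψ : P ⊕ U → ℝ}

noncomputable def gaussRate (μ σ : P ⊕ U → ℝ) (d : P) (d' : U) (x y : ℝ) : ℝ :=
  (μ (.inl d) - μ (.inr d')) ^ 2 * x * y / (σ (.inl d) ^ 2 * y + σ (.inr d') ^ 2 * x)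

noncomputable def minRate (G : P → U → ℝ → ℝ → ℝ) (ψ : P ⊕ U → ℝ) : ℝ :=
  univ.inf' univ_nonempty fun p : P × U => G p.1 p.2 (ψ (.inl p.1)) (ψ (.inr p.2))

def IsTight (G : P → U → ℝ → ℝ → ℝ) (ψ : P ⊕ U → ℝ) (d : P) (d' : U) : Prop :=
  G d d' (ψ (.inl d)) (ψ (.inr d')) = minRate G ψ

/-- `-(d/dt) σ e ^ 2 / (ψ e + t * η e)` at `t = 0`. -/
noncomputable def gain (σ ψ η : P ⊕ U → ℝ) (e : P ⊕ U) : ℝ :=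
  σ e ^ 2 * η e / ψ e ^ 2

lemma minRate_gaussRate_pos (hμ : ∀ (d : P) (d' : U), μ (.inr d') < μ (.inl d))
    (hσ : ∀ a, 0 < σ a) (hψ : ∀ a, 0 < ψ a) : 0 < minRate (gaussRate μ σ) ψ := by
  refine (Finset.lt_inf'_iff _).2 fun p _ => ?_
  have := sub_pos.2 (hμ p.1 p.2)
  have := hσ (.inl p.1); have := hσ (.inr p.2)
  have := hψ (.inl p.1); have := hψ (.inr p.2)
  unfold gaussRate
  positivity

lemma pos_of_minRate_gaussRate_pos (hψ : ∀ a, 0 ≤ ψ a) (h : 0 < minRate (gaussRate μ σ) ψ)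
    (e : P ⊕ U) : 0 < ψ e := by
  refine (hψ e).lt_of_ne' fun he => h.not_ge ?_
  obtain ⟨d⟩ := ‹Nonempty P›
  obtain ⟨d'⟩ := ‹Nonempty U›
  cases e with
  | inl d => exact (inf'_le _ (mem_univ (d, d'))).trans (by simp [gaussRate, he])
  | inr d' => exact (inf'_le _ (mem_univ (d, d'))).trans (by simp [gaussRate, he])

lemma exists_isTight_gain_nonpos (hμ : ∀ (d : P) (d' : U), μ (.inr d') < μ (.inl d))
    (hσ : ∀ a, 0 < σ a) (hψ : ψ ∈ stdSimplex ℝ (P ⊕ U))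
    (hopt : IsMaxOn (minRate (gaussRate μ σ)) (stdSimplex ℝ (P ⊕ U)) ψ)
    (hψpos : ∀ e, 0 < ψ e)
    {η : P ⊕ U → ℝ} (hη : ∑ e, η e = 0) : ∃ d d', IsTight (gaussRate μ σ) ψ d d' ∧
      gain σ ψ η (.inl d) + gain σ ψ η (.inr d') ≤ 0 := by
  by_contra! hgain
  have hmin : ∀ᶠ t in 𝓝[>] 0,
      minRate (gaussRate μ σ) ψ < minRate (gaussRate μ σ) fun e => ψ e + t * η e := by
    refine eventually_inf'_lt_inf' univ_nonempty (f := fun (p : P × U) t => gaussRate μ σ p.1 p.2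
        (ψ (.inl p.1) + t * η (.inl p.1)) (ψ (.inr p.2) + t * η (.inr p.2)))
      (fun p _ => ?_) fun p _ hp => ?_
    all_goals
      have := hσ (.inl p.1); have := hσ (.inr p.2)
      have := hψpos (.inl p.1); have := hψpos (.inr p.2)
      simp only [gaussRate]
    · exact tendsto_rate_comp_line _ _ (by positivity)
    · exact eventually_rate_lt_rate_comp_line (pow_pos (sub_pos.2 (hμ p.1 p.2)) 2)
        (by positivity) (by positivity) (hψpos _) (hψpos _) (hgain p.1 p.2 hp)
  have hpos : ∀ᶠ t in 𝓝[>] 0, ∀ e, 0 < ψ e + t * η e := by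
    refine eventually_all.2 fun e => (Tendsto.eventually ?_ (lt_mem_nhds (hψpos e)))
    exact ((continuous_const.add (continuous_id.mul continuous_const)).tendsto' 0 (ψ e)
      (by simp)).mono_left nhdsWithin_le_nhds
  obtain ⟨t, hlt, hpos⟩ := (hmin.and hpos).exists
  have hmem : (fun e => ψ e + t * η e) ∈ stdSimplex ℝ (P ⊕ U) :=
    ⟨fun e => (hpos e).le, by simp [sum_add_distrib, ← mul_sum, hη, hψ.2]⟩
  exact (isMaxOn_iff.1 hopt _ hmem).not_gt hlt

lemma exists_isTight_gain_neg_of_sum_neg (hμ : ∀ (d : P) (d' : U), μ (.inr d') < μ (.inl d))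
    (hσ : ∀ a, 0 < σ a) (hψ : ψ ∈ stdSimplex ℝ (P ⊕ U))
    (hopt : IsMaxOn (minRate (gaussRate μ σ)) (stdSimplex ℝ (P ⊕ U)) ψ)
    (hψpos : ∀ e, 0 < ψ e)
    {η : P ⊕ U → ℝ} (hη : ∑ e, η e < 0) : ∃ d d', IsTight (gaussRate μ σ) ψ d d' ∧
      gain σ ψ η (.inl d) + gain σ ψ η (.inr d') < 0 := by
  -- `ψ` itself has positive gain on every pair; adding `-(∑ η) • ψ` restores the total mass.
  set s := ∑ e, η e
  have hgain_sub : ∀ e, gain σ ψ (fun e => η e - s * ψ e) e =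
      gain σ ψ η e + (-s) * (σ e ^ 2 / ψ e) := fun e => by
    have := (hψpos e).ne'
    simp only [gain]
    field_simp
    ring
  obtain ⟨d, d', hdd', hgain⟩ := exists_isTight_gain_nonpos hμ hσ hψ hopt hψpos
    (η := fun e => η e - s * ψ e) (by simp [s, sum_sub_distrib, ← mul_sum, hψ.2])
  refine ⟨d, d', hdd', ?_⟩
  rw [hgain_sub, hgain_sub] at hgain
  have := hσ (.inl d); have := hσ (.inr d'); have := hψpos (.inl d); have := hψpos (.inr d')
  have : 0 < -s := neg_pos.2 hη
  have : 0 < -s * (σ (.inl d) ^ 2 / ψ (.inl d)) := by positivity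
  have : 0 < -s * (σ (.inr d') ^ 2 / ψ (.inr d')) := by positivity
  linarith

lemma exists_isTight_of_mem (hμ : ∀ (d : P) (d' : U), μ (.inr d') < μ (.inl d))
    (hσ : ∀ a, 0 < σ a) (hψ : ψ ∈ stdSimplex ℝ (P ⊕ U))
    (hopt : IsMaxOn (minRate (gaussRate μ σ)) (stdSimplex ℝ (P ⊕ U)) ψ)
    (hψpos : ∀ e, 0 < ψ e)
    (e : P ⊕ U) : ∃ d d', IsTight (gaussRate μ σ) ψ d d' ∧ (.inl d = e ∨ .inr d' = e) := by
  by_contra! h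
  obtain ⟨d, d', hdd', hgain⟩ :=
    exists_isTight_gain_neg_of_sum_neg hμ hσ hψ hopt hψpos (η := -Pi.single e 1) (by simp)
  simp [gain, h d d' hdd'] at hgain

lemma sum_sq_div_eq_of_forall_isTight_iff (hμ : ∀ (d : P) (d' : U), μ (.inr d') < μ (.inl d))
    (hσ : ∀ a, 0 < σ a) (hψ : ψ ∈ stdSimplex ℝ (P ⊕ U))
    (hopt : IsMaxOn (minRate (gaussRate μ σ)) (stdSimplex ℝ (P ⊕ U)) ψ)
    (hψpos : ∀ e, 0 < ψ e)
    {C : P ⊕ U → Prop}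
    (hC : ∀ d d', IsTight (gaussRate μ σ) ψ d d' → (C (.inl d) ↔ C (.inr d'))) :
    (∑ d : P, if C (.inl d) then (ψ (.inl d) / σ (.inl d)) ^ 2 else 0) =
      ∑ d' : U, if C (.inr d') then (ψ (.inr d') / σ (.inr d')) ^ 2 else 0 := by
  set w : P ⊕ U → ℝ := fun e => if C e then (ψ e / σ e) ^ 2 else 0
  set A := ∑ d : P, w (.inl d)
  set B := ∑ d' : U, w (.inr d')
  by_contra hAB
  have hgain_w : ∀ e k, σ e ^ 2 * (k * w e) / ψ e ^ 2 = if C e then k else 0 := fun e k => by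
    by_cases he : C e
    · have := (hσ e).ne'; have := (hψpos e).ne'
      simp only [w, he, if_true]
      field_simp
    · simp [w, he]
  -- Moving `ψ` by `±(B - A) (ψ / σ) ^ 2` on the two sides of `C` gives every tight pair gain `0`
  -- and loses mass `(B - A) ^ 2`.
  have hmass :
      ∑ e, Sum.elim (fun d => (B - A) * w (.inl d)) (fun d' => (A - B) * w (.inr d')) e < 0 := by
    have : B - A ≠ 0 := sub_ne_zero.2 (Ne.symm hAB)
    have : 0 < (B - A) ^ 2 := by positivity
    simp only [Fintype.sum_sum_type, Sum.elim_inl, Sum.elim_inr, ← mul_sum]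
    linarith [show (B - A) * A + (A - B) * B = -(B - A) ^ 2 by ring]
  obtain ⟨d, d', hdd', hgain⟩ := exists_isTight_gain_neg_of_sum_neg hμ hσ hψ hopt hψpos hmass
  simp only [gain, Sum.elim_inl, Sum.elim_inr, hgain_w, hC d d' hdd'] at hgain
  split_ifs at hgain <;> simp at hgain

end Design

/-- **Proposition 6 (necessary optimality conditions for Gaussian designs).**
If `ψ` on the simplex maximizes `ψ ↦ min_{(d,d') ∈ P × U} G_{d,d'}(ψ(d), ψ(d'))`,
where `G_{d,d'}` is the Gaussian known-variance rate function, then there exist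
`z > 0` and a type vector `ϑ : P × U → {0,1}` such that: (i) every row and column
of `ϑ` contains a 1; (ii) `G_{d,d'}(ψ(d), ψ(d')) ≥ z` with equality iff
`ϑ(d,d') = 1`; and (iii) in each equivalence class of the smallest equivalence
relation generated by the pairs with `ϑ(d,d') = 1`, the sums of `(ψ/σ)²` over
the class's members in `P` and in `U` coincide. -/
theorem stmt_7 {P U : Type*} [Fintype P] [Nonempty P] [Fintype U] [Nonempty U]
    (μ : P ⊕ U → ℝ) (σ : P ⊕ U → ℝ)
    (hμ : ∀ (d : P) (d' : U), μ (Sum.inr d') < μ (Sum.inl d))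
    (hσ : ∀ a, 0 < σ a)
    (G : P → U → ℝ → ℝ → ℝ)
    (hGdef : ∀ (d : P) (d' : U) (x y : ℝ), G d d' x y =
      (μ (Sum.inl d) - μ (Sum.inr d'))^2 * x * y /
        (σ (Sum.inl d)^2 * y + σ (Sum.inr d')^2 * x))
    (ψ : P ⊕ U → ℝ) (hψ0 : ∀ a, 0 ≤ ψ a) (hψ1 : ∑ a, ψ a = 1)
    (hopt : ∀ ψ' : P ⊕ U → ℝ, (∀ a, 0 ≤ ψ' a) → (∑ a, ψ' a = 1) →
      univ.inf' univ_nonempty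
          (fun p : P × U => G p.1 p.2 (ψ' (Sum.inl p.1)) (ψ' (Sum.inr p.2)))
        ≤ univ.inf' univ_nonempty
          (fun p : P × U => G p.1 p.2 (ψ (Sum.inl p.1)) (ψ (Sum.inr p.2)))) :
    ∃ (z : ℝ) (ϑ : P → U → Bool), 0 < z ∧
      (∀ d : P, ∃ d' : U, ϑ d d' = true) ∧
      (∀ d' : U, ∃ d : P, ϑ d d' = true) ∧
      (∀ (d : P) (d' : U),
        z ≤ G d d' (ψ (Sum.inl d)) (ψ (Sum.inr d')) ∧
        (G d d' (ψ (Sum.inl d)) (ψ (Sum.inr d')) = z ↔ ϑ d d' = true)) ∧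
      (∀ a : P ⊕ U,
        (∑ d : P,
          if Relation.EqvGen (fun u v : P ⊕ U =>
              ∃ (i : P) (j : U), ϑ i j = true ∧ u = Sum.inl i ∧ v = Sum.inr j)
            a (Sum.inl d)
          then (ψ (Sum.inl d) / σ (Sum.inl d))^2 else 0)
        =
        (∑ d' : U,
          if Relation.EqvGen (fun u v : P ⊕ U =>
              ∃ (i : P) (j : U), ϑ i j = true ∧ u = Sum.inl i ∧ v = Sum.inr j)
            a (Sum.inr d')
          then (ψ (Sum.inr d') / σ (Sum.inr d'))^2 else 0)) := by
  obtain rfl : G = gaussRate μ σ := funext₂ fun d d' => funext₂ (hGdef d d')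
  have hsimplex : ψ ∈ stdSimplex ℝ (P ⊕ U) := ⟨hψ0, hψ1⟩
  have hmax : IsMaxOn (minRate (gaussRate μ σ)) (stdSimplex ℝ (P ⊕ U)) ψ :=
    isMaxOn_iff.2 fun ψ' hψ' => hopt ψ' hψ'.1 hψ'.2
  have hz : 0 < minRate (gaussRate μ σ) ψ :=
    (minRate_gaussRate_pos hμ hσ fun _ => by positivity).trans_le
      (isMaxOn_iff.1 hmax _ (const_card_inv_mem_stdSimplex _))
  have hψpos := pos_of_minRate_gaussRate_pos hψ0 hz
  have hcover := exists_isTight_of_mem hμ hσ hsimplex hmax hψpos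
  refine ⟨_, fun d d' => decide (IsTight (gaussRate μ σ) ψ d d'), hz, fun d => ?_, fun d' => ?_,
    fun d d' => ⟨inf'_le _ (mem_univ (d, d')), decide_eq_true_iff.symm⟩, fun a => ?_⟩
  · obtain ⟨i, j, hij, h | h⟩ := hcover (.inl d)
    · cases h
      exact ⟨j, by simpa using hij⟩
    · cases h
  · obtain ⟨i, j, hij, h | h⟩ := hcover (.inr d')
    · cases h
    · cases h
      exact ⟨i, by simpa using hij⟩
  · exact sum_sq_div_eq_of_forall_isTight_iff hμ hσ hsimplex hmax hψpos fun i j hij =>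
      Relation.EqvGen.iff_of_rel ⟨i, j, by simpa using hij, rfl, rfl⟩
end

section
/- (Gaussian known-variance rate function, closed form) For all μ₁, μ₂ ∈ ℝ with μ₁ ≥ μ₂, all σ₁, σ₂ > 0 and all ψ₁, ψ₂ > 0: inf over all (m₁, m₂) ∈ ℝ² with m₂ ≥ m₁ of [ψ₁·(μ₁ − m₁)²/(2σ₁²) + ψ₂·(μ₂ − m₂)²/(2σ₂²)] equals (μ₁ − μ₂)² / (2·(σ₁²/ψ₁ + σ₂²/ψ₂)). -/
/-! Writing `ψ (μ - m)² / (2σ²) = (μ - m)² / (2 (σ²/ψ))`, the problem is to minimise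
`x²/(2s₁) + y²/(2s₂)` over `x - y ≥ d`, where `x = μ₁ - m₁`, `y = μ₂ - m₂`, `sᵢ = σᵢ²/ψᵢ` and
`d = μ₁ - μ₂ ≥ 0`. Sedrakyan's form of Cauchy–Schwarz gives
`d² ≤ (x - y)² ≤ (s₁ + s₂)(x²/s₁ + y²/s₂)`, with equality at the common mean
`m₁ = m₂ = (s₂μ₁ + s₁μ₂)/(s₁ + s₂)`. -/

lemma sq_sub_div_add_le_sq_div_add_sq_div (x y : ℝ) {s t : ℝ} (hs : 0 < s) (ht : 0 < t) :
    (x - y) ^ 2 / (s + t) ≤ x ^ 2 / s + y ^ 2 / t := by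
  have h := Finset.sq_sum_div_le_sum_sq_div Finset.univ ![x, -y] (g := ![s, t])
    (by simp [Fin.forall_fin_two, hs, ht])
  simpa [Fin.sum_univ_two, ← sub_eq_add_neg] using h

lemma isLeast_sq_div_add_sq_div_of_le {μ₁ μ₂ s₁ s₂ : ℝ} (hμ : μ₂ ≤ μ₁)
    (hs₁ : 0 < s₁) (hs₂ : 0 < s₂) :
    IsLeast {v : ℝ | ∃ m₁ m₂ : ℝ, m₁ ≤ m₂ ∧
        v = (μ₁ - m₁) ^ 2 / (2 * s₁) + (μ₂ - m₂) ^ 2 / (2 * s₂)}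
      ((μ₁ - μ₂) ^ 2 / (2 * (s₁ + s₂))) := by
  constructor
  · refine ⟨(s₂ * μ₁ + s₁ * μ₂) / (s₁ + s₂), _, le_rfl, ?_⟩
    field_simp
    ring
  · rintro v ⟨m₁, m₂, hm, rfl⟩
    have hsq : (μ₁ - μ₂) ^ 2 ≤ ((μ₁ - m₁) - (μ₂ - m₂)) ^ 2 :=
      pow_le_pow_left₀ (sub_nonneg.mpr hμ) (by linarith) 2
    calc (μ₁ - μ₂) ^ 2 / (2 * (s₁ + s₂))
        ≤ ((μ₁ - m₁) - (μ₂ - m₂)) ^ 2 / (s₁ + s₂) / 2 := by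
          rw [div_div, mul_comm (s₁ + s₂)]
          gcongr
      _ ≤ ((μ₁ - m₁) ^ 2 / s₁ + (μ₂ - m₂) ^ 2 / s₂) / 2 := by
          gcongr
          exact sq_sub_div_add_le_sq_div_add_sq_div _ _ hs₁ hs₂
      _ = (μ₁ - m₁) ^ 2 / (2 * s₁) + (μ₂ - m₂) ^ 2 / (2 * s₂) := by
          field_simp

/-- **Gaussian known-variance rate function (closed form).** For `μ₁ ≥ μ₂`,
`σ₁, σ₂ > 0`, `ψ₁, ψ₂ > 0`, the infimum over `m₂ ≥ m₁` of the ψ-weighted sum of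
Gaussian Kullback–Leibler divergences equals
`(μ₁ − μ₂)² / (2·(σ₁²/ψ₁ + σ₂²/ψ₂))`. -/
theorem stmt_10 (μ₁ μ₂ σ₁ σ₂ ψ₁ ψ₂ : ℝ) (hμ : μ₂ ≤ μ₁)
    (hσ₁ : 0 < σ₁) (hσ₂ : 0 < σ₂) (hψ₁ : 0 < ψ₁) (hψ₂ : 0 < ψ₂) :
    sInf {v : ℝ | ∃ m₁ m₂ : ℝ, m₁ ≤ m₂ ∧
        v = ψ₁ * (μ₁ - m₁)^2 / (2 * σ₁^2) + ψ₂ * (μ₂ - m₂)^2 / (2 * σ₂^2)}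
      = (μ₁ - μ₂)^2 / (2 * (σ₁^2 / ψ₁ + σ₂^2 / ψ₂)) := by
  have weight_into_variance : ∀ {ψ σ : ℝ}, 0 < ψ → ∀ x : ℝ,
      ψ * x ^ 2 / (2 * σ ^ 2) = x ^ 2 / (2 * (σ ^ 2 / ψ)) := by
    intro ψ σ hψ x
    field_simp [hψ.ne']
  simp_rw [weight_into_variance hψ₁, weight_into_variance hψ₂]
  exact (isLeast_sq_div_add_sq_div_of_le hμ (by positivity) (by positivity)).csInf_eq
end

section
/- (Logarithmic growth of cumulative sampling effort, from the proof of Lemma 3) Let Γ > 0 and let (s_n)_{n ≥ 1} be a sequence of real numbers such that Γ·exp(−2Γ·s₁) ≤ 1 and s_{n+1} ≥ s_n + (1/2)·exp(−2Γ·s_n) for every n ≥ 1. Then for every n ≥ 1: s_n ≥ (1/(2Γ))·ln( exp(2Γ·s₁) + Γ·(n − 1) ). -/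
/-! With `x n = exp (2Γ sₙ)`, the recursion and `1 + t ≤ exp t` give
`x (n + 1) ≥ x n · exp (Γ / x n) ≥ x n + Γ`, so `x` grows at least linearly with slope `Γ`;
taking logarithms gives the bound. -/

open Real

lemma exp_add_le_exp_of_add_half_exp_neg_le {Γ a b : ℝ} (hΓ : 0 ≤ Γ)
    (h : a + 1 / 2 * exp (-2 * Γ * a) ≤ b) :
    exp (2 * Γ * a) + Γ ≤ exp (2 * Γ * b) := by
  have hexp : exp (2 * Γ * a) * exp (-2 * Γ * a) = 1 := by
    rw [← exp_add]; ring_nf; exact exp_zero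
  calc exp (2 * Γ * a) + Γ
      = exp (2 * Γ * a) * (1 + Γ * exp (-2 * Γ * a)) := by linear_combination -Γ * hexp
    _ ≤ exp (2 * Γ * a) * exp (Γ * exp (-2 * Γ * a)) := by
        gcongr; linarith [add_one_le_exp (Γ * exp (-2 * Γ * a))]
    _ = exp (2 * Γ * a + Γ * exp (-2 * Γ * a)) := (exp_add _ _).symm
    _ ≤ exp (2 * Γ * b) := by gcongr; nlinarith

lemma add_mul_sub_one_le_of_add_le_succ {x : ℕ → ℝ} {d : ℝ}
    (h : ∀ n, 1 ≤ n → x n + d ≤ x (n + 1)) (n : ℕ) (hn : 1 ≤ n) :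
    x 1 + d * ((n : ℝ) - 1) ≤ x n := by
  induction n, hn using Nat.le_induction with
  | base => simp
  | succ m hm ih => push_cast; linarith [h m hm]

theorem stmt_16_general (Γ : ℝ) (hΓ : 0 < Γ) (s : ℕ → ℝ)
    (hrec : ∀ n : ℕ, 1 ≤ n → s n + (1/2) * Real.exp (-2 * Γ * s n) ≤ s (n + 1)) :
    ∀ n : ℕ, 1 ≤ n →
      (1 / (2 * Γ)) * Real.log (Real.exp (2 * Γ * s 1) + Γ * ((n : ℝ) - 1))
        ≤ s n := by
  intro n hn
  have hlinear : exp (2 * Γ * s 1) + Γ * ((n : ℝ) - 1) ≤ exp (2 * Γ * s n) :=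
    add_mul_sub_one_le_of_add_le_succ (x := fun k ↦ exp (2 * Γ * s k))
      (fun k hk ↦ exp_add_le_exp_of_add_half_exp_neg_le hΓ.le (hrec k hk)) n hn
  have hpos : 0 < exp (2 * Γ * s 1) + Γ * ((n : ℝ) - 1) := by
    have : (1 : ℝ) ≤ n := by exact_mod_cast hn
    positivity
  have hlog := log_le_log hpos hlinear
  rw [log_exp] at hlog
  rw [one_div_mul_eq_div, div_le_iff₀ (by positivity)]
  linarith

/-- **Logarithmic growth of cumulative sampling effort (from the proof of
Lemma 3).** If `Γ > 0`, `Γ·exp(−2Γ·s₁) ≤ 1` and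
`s_{n+1} ≥ s_n + (1/2)·exp(−2Γ·s_n)` for all `n ≥ 1`, then for all `n ≥ 1`,
`s_n ≥ (1/(2Γ))·ln(exp(2Γ·s₁) + Γ·(n − 1))`. -/
theorem stmt_16 (Γ : ℝ) (hΓ : 0 < Γ) (s : ℕ → ℝ)
    (h1 : Γ * Real.exp (-2 * Γ * s 1) ≤ 1)
    (hrec : ∀ n : ℕ, 1 ≤ n → s n + (1/2) * Real.exp (-2 * Γ * s n) ≤ s (n + 1)) :
    ∀ n : ℕ, 1 ≤ n →
      (1 / (2 * Γ)) * Real.log (Real.exp (2 * Γ * s 1) + Γ * ((n : ℝ) - 1))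
        ≤ s n :=
  stmt_16_general Γ hΓ s hrec
end

section
/- (Vanishing weighted averages, from Step 2.1 of the proof of Theorem 3) Let (a_t)_{t ≥ 1} be a sequence with 0 ≤ a_t ≤ 1 for all t and Σ_{t=1}^{∞} a_t = ∞, let c > 0, B ≥ 0, and let (b_t)_{t ≥ 1} satisfy 0 ≤ b_t ≤ B for all t and, for some index T̃ ≥ 1, b_t ≤ exp(−c·Σ_{τ=1}^{t−1} a_τ) for all t ≥ T̃. Then lim_{T → ∞} (Σ_{t=1}^{T} a_t·b_t) / (Σ_{t=1}^{T} a_t) = 0. -/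
/-!
Write `S_T = Σ_{t ≤ T} a_t`. Since `1 - e^{-y} ≥ y e^{-y}` and `0 ≤ a_t ≤ 1`, each late term satisfies
`a_t b_t ≤ a_t e^{-c S_{t-1}} ≤ (e^c / c) (e^{-c S_{t-1}} - e^{-c S_t})`, so the partial sums of `a_t b_t`
telescope to a bounded sequence, while the denominators `S_T` diverge.
-/

open Finset Filter

namespace Real

lemma mul_exp_neg_le_one_sub_exp_neg (y : ℝ) : y * exp (-y) ≤ 1 - exp (-y) := by
  have h : (y + 1) * exp (-y) ≤ exp y * exp (-y) :=
    mul_le_mul_of_nonneg_right (add_one_le_exp y) (exp_pos _).le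
  rw [← exp_add, add_neg_cancel, exp_zero] at h
  linarith

lemma mul_le_exp_mul_one_sub_exp_neg {c x : ℝ} (hc : 0 ≤ c) (hx₀ : 0 ≤ x) (hx₁ : x ≤ 1) :
    c * x ≤ exp c * (1 - exp (-(c * x))) := by
  have hcx : 0 ≤ c * x := mul_nonneg hc hx₀
  have hexp : 1 ≤ exp c * exp (-(c * x)) := by
    rw [← exp_add]
    exact one_le_exp (by nlinarith)
  calc c * x ≤ c * x * (exp c * exp (-(c * x))) := le_mul_of_one_le_right hcx hexp
    _ = exp c * (c * x * exp (-(c * x))) := by ring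
    _ ≤ exp c * (1 - exp (-(c * x))) :=
      mul_le_mul_of_nonneg_left (mul_exp_neg_le_one_sub_exp_neg _) (exp_pos c).le

lemma mul_exp_neg_le_div_mul_sub {c x P : ℝ} (hc : 0 < c) (hx₀ : 0 ≤ x) (hx₁ : x ≤ 1) :
    x * exp (-c * P) ≤ exp c / c * (exp (-c * P) - exp (-c * (P + x))) := by
  have key := mul_le_exp_mul_one_sub_exp_neg hc.le hx₀ hx₁
  have hsplit : exp (-c * (P + x)) = exp (-c * P) * exp (-(c * x)) := by
    rw [← exp_add]; ring_nf
  rw [hsplit, div_mul_eq_mul_div, le_div_iff₀ hc]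
  have := mul_le_mul_of_nonneg_left key (exp_pos (-c * P)).le
  linarith

end Real

lemma exists_forall_sum_Icc_le_of_le_sub {f g : ℕ → ℝ} {m : ℕ} (hf : ∀ t, 1 ≤ t → 0 ≤ f t)
    (hg : ∀ t, 0 ≤ g t) (hfg : ∀ t, m ≤ t → f (t + 1) ≤ g t - g (t + 1)) :
    ∃ M, ∀ T, ∑ t ∈ Icc 1 T, f t ≤ M := by
  refine ⟨∑ t ∈ Icc 1 m, f t + g m, fun T => ?_⟩
  have hlyap : ∀ T, m ≤ T → ∑ t ∈ Icc 1 T, f t + g T ≤ ∑ t ∈ Icc 1 m, f t + g m := by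
    intro T hT
    induction T, hT using Nat.le_induction with
    | base => rfl
    | succ T hT ih =>
      rw [sum_Icc_succ_top (by omega)]
      linarith [hfg T hT]
  calc ∑ t ∈ Icc 1 T, f t ≤ ∑ t ∈ Icc 1 (max T m), f t :=
        sum_le_sum_of_subset_of_nonneg (Icc_subset_Icc_right (le_max_left T m))
          fun t ht _ => hf t (mem_Icc.1 ht).1
    _ ≤ ∑ t ∈ Icc 1 (max T m), f t + g (max T m) := le_add_of_nonneg_right (hg _)
    _ ≤ _ := hlyap _ (le_max_right T m)

theorem stmt_18_general (a b : ℕ → ℝ)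
    (ha : ∀ t : ℕ, 1 ≤ t → 0 ≤ a t ∧ a t ≤ 1)
    (hdiv : Filter.Tendsto (fun T : ℕ => ∑ t ∈ Finset.Icc 1 T, a t)
      Filter.atTop Filter.atTop)
    (c : ℝ) (hc : 0 < c) (B : ℝ)
    (hb : ∀ t : ℕ, 1 ≤ t → 0 ≤ b t ∧ b t ≤ B)
    (T₀ : ℕ)
    (hbexp : ∀ t : ℕ, T₀ ≤ t →
      b t ≤ Real.exp (-c * ∑ τ ∈ Finset.Icc 1 (t - 1), a τ)) :
    Filter.Tendsto
      (fun T : ℕ => (∑ t ∈ Finset.Icc 1 T, a t * b t) / (∑ t ∈ Finset.Icc 1 T, a t))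
      Filter.atTop (nhds 0) := by
  have hab : ∀ t, 1 ≤ t → 0 ≤ a t * b t := fun t ht => mul_nonneg (ha t ht).1 (hb t ht).1
  obtain ⟨M, hM⟩ : ∃ M, ∀ T, ∑ t ∈ Icc 1 T, a t * b t ≤ M := by
    refine exists_forall_sum_Icc_le_of_le_sub (g := fun T => Real.exp c / c *
      Real.exp (-c * ∑ t ∈ Icc 1 T, a t)) (m := T₀) hab (fun T => by positivity) fun t ht => ?_
    obtain ⟨ha₀, ha₁⟩ := ha (t + 1) (Nat.le_add_left 1 t)
    calc a (t + 1) * b (t + 1) ≤ a (t + 1) * Real.exp (-c * ∑ τ ∈ Icc 1 t, a τ) :=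
          mul_le_mul_of_nonneg_left (by simpa using hbexp (t + 1) (by omega)) ha₀
      _ ≤ _ := by
        rw [sum_Icc_succ_top (Nat.le_add_left 1 t), ← mul_sub]
        exact Real.mul_exp_neg_le_div_mul_sub hc ha₀ ha₁
  have hpos : ∀ᶠ T in atTop, 0 < ∑ t ∈ Icc 1 T, a t := hdiv.eventually_gt_atTop 0
  refine squeeze_zero' ?_ ?_ (tendsto_const_nhds.div_atTop hdiv : Tendsto (fun T => M / _) _ _)
  · filter_upwards [hpos] with T hT
    exact div_nonneg (sum_nonneg fun t ht => hab t (mem_Icc.1 ht).1) hT.le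
  · filter_upwards [hpos] with T hT
    exact div_le_div_of_nonneg_right (hM T) hT.le

/-- **Vanishing weighted averages (from Step 2.1 of the proof of Theorem 3).**
If `0 ≤ a_t ≤ 1` with `Σ a_t = ∞`, `0 ≤ b_t ≤ B`, and eventually
`b_t ≤ exp(−c·Σ_{τ=1}^{t−1} a_τ)` for some `c > 0`, then the weighted average
`(Σ_{t≤T} a_t b_t)/(Σ_{t≤T} a_t) → 0` as `T → ∞`. -/
theorem stmt_18 (a b : ℕ → ℝ)
    (ha : ∀ t : ℕ, 1 ≤ t → 0 ≤ a t ∧ a t ≤ 1)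
    (hdiv : Filter.Tendsto (fun T : ℕ => ∑ t ∈ Finset.Icc 1 T, a t)
      Filter.atTop Filter.atTop)
    (c : ℝ) (hc : 0 < c) (B : ℝ) (hB : 0 ≤ B)
    (hb : ∀ t : ℕ, 1 ≤ t → 0 ≤ b t ∧ b t ≤ B)
    (T₀ : ℕ) (hT₀ : 1 ≤ T₀)
    (hbexp : ∀ t : ℕ, T₀ ≤ t →
      b t ≤ Real.exp (-c * ∑ τ ∈ Finset.Icc 1 (t - 1), a τ)) :
    Filter.Tendsto
      (fun T : ℕ => (∑ t ∈ Finset.Icc 1 T, a t * b t) / (∑ t ∈ Finset.Icc 1 T, a t))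
      Filter.atTop (nhds 0) :=
  stmt_18_general a b ha hdiv c hc B hb T₀ hbexp
end
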